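/- Let g : ℝ → ℝ be continuously differentiable with g′(t) > 0 for all t ∈ ℝ. Then 0 < ∫_ℝ φ(g(t)) g′(t) dt ≤ 1, where the integral equals lim_{y→∞} Φ(g(y)) − lim_{y→−∞} Φ(g(y)). -/
import Mathlib


open MeasureTheory Set Filter

/-- The standard normal probability density function φ. -/
noncomputable def stdGaussianPDF (x : ℝ) : ℝ :=
  (Real.sqrt (2 * Real.pi))⁻¹ * Real.exp (-(x ^ 2) / 2)

/-- The standard normal cumulative distribution function Φ. -/
noncomputable def stdGaussianCDF (x : ℝ) : ℝ :=
  ∫ t in Set.Iic x, stdGaussianPDF t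

lemma stdGaussianPDF_eq : stdGaussianPDF = ProbabilityTheory.gaussianPDFReal 0 1 := by
  ext x
  simp [stdGaussianPDF, ProbabilityTheory.gaussianPDFReal]

lemma stdGaussianPDF_pos (x : ℝ) : 0 < stdGaussianPDF x := by
  rw [stdGaussianPDF_eq]
  exact ProbabilityTheory.gaussianPDFReal_pos 0 1 x one_ne_zero

lemma stdGaussianPDF_continuous : Continuous stdGaussianPDF := by
  unfold stdGaussianPDF
  fun_prop

lemma stdGaussianPDF_integrable : Integrable stdGaussianPDF := by
  rw [stdGaussianPDF_eq]
  exact ProbabilityTheory.integrable_gaussianPDFReal 0 1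

lemma stdGaussianPDF_integral : ∫ x, stdGaussianPDF x = 1 := by
  rw [stdGaussianPDF_eq]
  exact ProbabilityTheory.integral_gaussianPDFReal_eq_one 0 one_ne_zero

lemma stdGaussianCDF_nonneg (x : ℝ) : 0 ≤ stdGaussianCDF x :=
  integral_nonneg fun t => (stdGaussianPDF_pos t).le

lemma stdGaussianCDF_le_one (x : ℝ) : stdGaussianCDF x ≤ 1 := by
  rw [← stdGaussianPDF_integral]
  exact setIntegral_le_integral stdGaussianPDF_integrable
    (ae_of_all _ fun t => (stdGaussianPDF_pos t).le)

lemma hasDerivAt_stdGaussianCDF (x : ℝ) :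
    HasDerivAt stdGaussianCDF (stdGaussianPDF x) x := by
  have hint := stdGaussianPDF_integrable
  have key : stdGaussianCDF = fun y =>
      stdGaussianCDF 0 + ∫ t in (0:ℝ)..y, stdGaussianPDF t := by
    funext y
    have h := intervalIntegral.integral_Iic_sub_Iic hint.integrableOn hint.integrableOn
      (a := 0) (b := y)
    simp only [stdGaussianCDF]
    linarith
  have h2 : HasDerivAt (fun y => ∫ t in (0:ℝ)..y, stdGaussianPDF t)
      (stdGaussianPDF x) x :=
    intervalIntegral.integral_hasDerivAt_right hint.intervalIntegrable
      (stdGaussianPDF_continuous.stronglyMeasurableAtFilter _ _)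
      stdGaussianPDF_continuous.continuousAt
  rw [key]
  exact h2.const_add _

/-- For `g` continuously differentiable with `g' > 0` everywhere,
`0 < ∫_ℝ φ(g(t)) g'(t) dt ≤ 1`, the integral being the difference of the limits of
`Φ(g(y))` as `y → ∞` and `y → −∞`. -/
theorem integral_candidate_density_mem_Ioc (g g' : ℝ → ℝ)
    (hderiv : ∀ y, HasDerivAt g (g' y) y)
    (hcont : Continuous g') (hpos : ∀ y, 0 < g' y) :
    ∃ Lp Lm : ℝ,
      Tendsto (fun y => stdGaussianCDF (g y)) atTop (nhds Lp) ∧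
      Tendsto (fun y => stdGaussianCDF (g y)) atBot (nhds Lm) ∧
      (∫ t, stdGaussianPDF (g t) * g' t) = Lp - Lm ∧
      0 < (∫ t, stdGaussianPDF (g t) * g' t) ∧
      (∫ t, stdGaussianPDF (g t) * g' t) ≤ 1 := by
  set F : ℝ → ℝ := fun y => stdGaussianCDF (g y) with hFdef
  set f : ℝ → ℝ := fun t => stdGaussianPDF (g t) * g' t with hfdef
  have hg_cont : Continuous g :=
    continuous_iff_continuousAt.2 fun y => (hderiv y).continuousAt
  have hfc : Continuous f :=
    ((stdGaussianPDF_continuous.comp hg_cont).mul hcont)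
  have hfpos : ∀ y, 0 < f y := fun y =>
    mul_pos (stdGaussianPDF_pos (g y)) (hpos y)
  have hF : ∀ y, HasDerivAt F (f y) y := fun y =>
    (hasDerivAt_stdGaussianCDF (g y)).comp y (hderiv y)
  have hF0 : ∀ y, 0 ≤ F y := fun y => stdGaussianCDF_nonneg (g y)
  have hF1 : ∀ y, F y ≤ 1 := fun y => stdGaussianCDF_le_one (g y)
  have hmono : StrictMono F := by
    apply strictMono_of_deriv_pos
    intro x
    rw [(hF x).deriv]
    exact hfpos x
  have hbddA : BddAbove (Set.range F) := ⟨1, by rintro _ ⟨y, rfl⟩; exact hF1 y⟩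
  have hbddB : BddBelow (Set.range F) := ⟨0, by rintro _ ⟨y, rfl⟩; exact hF0 y⟩
  refine ⟨⨆ y, F y, ⨅ y, F y, tendsto_atTop_ciSup hmono.monotone hbddA,
    tendsto_atBot_ciInf hmono.monotone hbddB, ?_, ?_, ?_⟩
  · -- integral equality
    have hfint : Integrable f := by
      apply integrable_of_intervalIntegral_norm_bounded (l := atTop)
        (a := fun i : ℝ => -i) (b := fun i : ℝ => i) (μ := volume) 1
      · intro i
        exact (hfc.integrableOn_Ioc)
      · exact tendsto_neg_atTop_atBot
      · exact tendsto_id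
      · filter_upwards [eventually_ge_atTop (0:ℝ)] with i hi
        have h1 : ∫ x in (-i)..i, ‖f x‖ = ∫ x in (-i)..i, f x :=
          intervalIntegral.integral_congr fun x _ => Real.norm_of_nonneg (hfpos x).le
        have h2 : ∫ x in (-i)..i, f x = F i - F (-i) :=
          intervalIntegral.integral_eq_sub_of_hasDerivAt (fun x _ => hF x)
            (hfc.intervalIntegrable _ _)
        rw [h1, h2]
        have := hF1 i
        have := hF0 (-i)
        linarith
    exact integral_of_hasDerivAt_of_tendsto hF hfint
      (tendsto_atBot_ciInf hmono.monotone hbddB)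
      (tendsto_atTop_ciSup hmono.monotone hbddA)
  all_goals {
    have hfint : Integrable f := by
      apply integrable_of_intervalIntegral_norm_bounded (l := atTop)
        (a := fun i : ℝ => -i) (b := fun i : ℝ => i) (μ := volume) 1
      · intro i
        exact (hfc.integrableOn_Ioc)
      · exact tendsto_neg_atTop_atBot
      · exact tendsto_id
      · filter_upwards [eventually_ge_atTop (0:ℝ)] with i hi
        have h1 : ∫ x in (-i)..i, ‖f x‖ = ∫ x in (-i)..i, f x :=
          intervalIntegral.integral_congr fun x _ => Real.norm_of_nonneg (hfpos x).le
        have h2 : ∫ x in (-i)..i, f x = F i - F (-i) :=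
          intervalIntegral.integral_eq_sub_of_hasDerivAt (fun x _ => hF x)
            (hfc.intervalIntegrable _ _)
        rw [h1, h2]
        have := hF1 i
        have := hF0 (-i)
        linarith
    have heq : (∫ t, f t) = (⨆ y, F y) - ⨅ y, F y :=
      integral_of_hasDerivAt_of_tendsto hF hfint
        (tendsto_atBot_ciInf hmono.monotone hbddB)
        (tendsto_atTop_ciSup hmono.monotone hbddA)
    have hle1 : (⨆ y, F y) ≤ 1 := ciSup_le hF1
    have hge0 : (0:ℝ) ≤ ⨅ y, F y := le_ciInf hF0
    have h01 : F 0 < F 1 := hmono (by norm_num)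
    have hlow : (⨅ y, F y) ≤ F 0 := ciInf_le hbddB 0
    have hhigh : F 1 ≤ ⨆ y, F y := le_ciSup hbddA 1
    rw [heq]; linarith
  }
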